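/- arXiv:1410.4941 — 3 statements merged into one kernel-verified Lean document; each statement's English description precedes it below -/
import Mathlib

section
/- Let α(1) ≥ α(2) ≥ … ≥ α(n), β(1) ≥ … ≥ β(n), γ(1) ≥ … ≥ γ(n) be three non-increasing sequences of non-negative real numbers that satisfy all Thompson–Freede inequalities: for every m ≤ n and all strictly increasing sequences (i_1,…,i_m) and (j_1,…,j_m) of integers in {1,…,n} with i_m + j_m ≤ n + m, one has ∑_{k=1}^m γ(i_k + j_k − k) ≤ ∑_{k=1}^m α(i_k) + ∑_{k=1}^m β(j_k). Let f : [0,∞) → [0,∞) be a concave function with f(0)=0. Then the sequences also satisfy the f-version of the Thompson–Freede inequalities: for every m ≤ n and all strictly increasing sequences (i_1,…,i_m) and (j_1,…,j_m) of integers in {1,…,n} with i_m + j_m ≤ n + m, one has ∑_{k=1}^m f(γ(i_k + j_k − k)) ≤ ∑_{k=1}^m f(α(i_k)) + ∑_{k=1}^m f(β(j_k)). -/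
/-!
On any finite subset of `[0, ∞)`, a concave nondecreasing `f` with `f 0 = 0` is a nonnegative
combination of truncations `x ↦ min x t` (peel off the slope of the last chord and recurse), so it
suffices to prove the inequalities for `f = min · t`. If `p` of the numbers `α (i k)` and `q` of
the numbers `β (j k)` exceed `t`, then the first `p + q` terms on the left are at most `t` each,
and the remaining ones are bounded by the Thompson–Freede inequality for the shifted sequences
`i (p + ·)`, `j (q + ·)`, which only raises the arguments of the nonincreasing `γ`.
-/

open Finset

theorem ConcaveOn.div_sub_le_div_sub {s : Set ℝ} {f : ℝ → ℝ} (hf : ConcaveOn ℝ s f)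
    {x y b a : ℝ} (hx : x ∈ s) (ha : a ∈ s) (hxy : x < y) (hyb : y ≤ b) (hba : b < a) :
    (f a - f b) / (a - b) ≤ (f y - f x) / (y - x) := by
  have hy : y ∈ s := hf.1.ordConnected.out hx ha ⟨hxy.le, hyb.trans hba.le⟩
  rcases hyb.eq_or_lt with rfl | hyb
  · exact hf.slope_anti_adjacent hx ha hxy hba
  · have hb : b ∈ s := hf.1.ordConnected.out hx ha ⟨(hxy.trans hyb).le, hba.le⟩
    exact (hf.slope_anti_adjacent hy ha hyb hba).trans (hf.slope_anti_adjacent hx hb hxy hyb)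

/-- A negative secant slope would persist to the right and drive `f` below zero. -/
theorem ConcaveOn.monotoneOn_Ici_of_nonneg {f : ℝ → ℝ} (hf : ConcaveOn ℝ (Set.Ici 0) f)
    (hnonneg : ∀ x, 0 ≤ x → 0 ≤ f x) : MonotoneOn f (Set.Ici 0) := by
  intro x hx y hy hxy
  by_contra! hlt
  have hxy' : x < y := hxy.lt_of_ne (by rintro rfl; exact hlt.false)
  set σ := (f y - f x) / (y - x)
  have hσ : σ < 0 := div_neg_of_neg_of_pos (by linarith) (by linarith)
  set z := y - f y / σ + 1
  have hyz : y < z := by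
    have : 0 ≤ -(f y / σ) := neg_nonneg.2 (div_nonpos_of_nonneg_of_nonpos (hnonneg y hy) hσ.le)
    linarith
  have hz : z ∈ Set.Ici (0 : ℝ) := le_trans hy hyz.le
  have hslope : (f z - f y) / (z - y) ≤ σ := hf.slope_anti_adjacent hx hz hxy' hyz
  rw [div_le_iff₀ (by linarith)] at hslope
  have : f z ≤ σ := by
    have : σ * (z - y) = σ - f y := by
      rw [show z - y = 1 - f y / σ by ring, mul_sub, mul_one, mul_div_cancel₀ _ hσ.ne]
    linarith
  linarith [hnonneg z hz]

theorem ConcaveOn.exists_eq_sum_mul_min {f : ℝ → ℝ} (hf : ConcaveOn ℝ (Set.Ici 0) f) (hf0 : f 0 = 0)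
    (S : Finset ℝ) (hS : ∀ t ∈ S, 0 < t) (hmono : MonotoneOn f ↑(insert 0 S)) :
    ∃ w : ℝ → ℝ, (∀ t, 0 ≤ w t) ∧ ∀ x ∈ insert 0 S, f x = ∑ t ∈ S, w t * min x t := by
  induction S using Finset.induction_on_max generalizing f with
  | empty => exact ⟨0, fun _ ↦ le_rfl, by simp [hf0]⟩
  | insert a s hsa ih =>
    have ha : 0 < a := hS a (mem_insert_self a s)
    have hs : ∀ t ∈ s, 0 < t := fun t ht ↦ hS t (mem_insert_of_mem ht)
    set b := (insert 0 s).max' (insert_nonempty 0 s)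
    have hb : b ∈ insert 0 s := max'_mem _ _
    have hle_b : ∀ x ∈ insert 0 s, x ≤ b := fun x hx ↦ le_max' _ x hx
    have hba : b < a := by
      rcases mem_insert.1 hb with hb | hb
      · exact hb ▸ ha
      · exact hsa b hb
    have hab : a ∉ s := fun h ↦ (hsa a h).false
    -- `f = (f - d * x) + d * min x a` on `insert 0 (insert a s)`, with `d` the slope of the last
    -- chord; `f - d * x` stays concave and, by concavity, nondecreasing on `insert 0 s`.
    set d := (f a - f b) / (a - b)
    have hd : 0 ≤ d := by
      refine div_nonneg (sub_nonneg.2 (hmono ?_ ?_ hba.le)) (sub_pos.2 hba).le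
      · exact mem_coe.2 (insert_subset_insert 0 (subset_insert a s) hb)
      · simp
    have hg : ConcaveOn ℝ (Set.Ici 0) (fun x ↦ f x - d * x) :=
      hf.sub ((convexOn_id (convex_Ici (0 : ℝ))).smul hd)
    have hgmono : MonotoneOn (fun x ↦ f x - d * x) ↑(insert 0 s) := by
      intro x hx y hy hxy
      rcases hxy.eq_or_lt with rfl | hxy
      · rfl
      have hx0 : x ∈ Set.Ici (0 : ℝ) := by
        rcases mem_insert.1 hx with rfl | hx
        exacts [Set.mem_Ici.2 le_rfl, (hs x hx).le]
      have hslope := hf.div_sub_le_div_sub hx0 (Set.mem_Ici.2 ha.le) hxy (hle_b y hy) hba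
      rw [le_div_iff₀ (sub_pos.2 hxy)] at hslope
      dsimp only
      linarith
    obtain ⟨w, hw, hgw⟩ := ih hg (by simp [hf0]) hs hgmono
    refine ⟨Function.update w a d, fun t ↦ ?_, fun x hx ↦ ?_⟩
    · rw [Function.update_apply]
      split_ifs
      exacts [hd, hw t]
    rw [sum_insert hab, Function.update_self,
      sum_congr rfl fun t ht ↦ by rw [Function.update_of_ne (hsa t ht).ne]]
    rcases mem_insert.1 hx with rfl | hx
    · simpa [hf0, ha.le] using hgw 0 (mem_insert_self 0 s)
    rcases mem_insert.1 hx with rfl | hx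
    · have hmin : ∀ t ∈ s, w t * min x t = w t * min b t := fun t ht ↦ by
        rw [min_eq_right (hsa t ht).le, min_eq_right (hle_b t (mem_insert_of_mem ht))]
      have hdab : d * (x - b) = f x - f b := div_mul_cancel₀ _ (sub_pos.2 hba).ne'
      rw [min_self, sum_congr rfl hmin, ← hgw b hb]
      linarith
    · have hxa : x ≤ a := (hsa x hx).le
      rw [min_eq_left hxa, ← hgw x (mem_insert_of_mem hx)]
      ring

theorem ConcaveOn.sum_le_sum_add_sum_of_sum_min_le {f : ℝ → ℝ} (hf : ConcaveOn ℝ (Set.Ici 0) f)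
    (hf0 : f 0 = 0) (hmono : MonotoneOn f (Set.Ici 0)) {ι : Type*} {s : Finset ι} {a b c : ι → ℝ}
    (ha : ∀ k ∈ s, 0 ≤ a k) (hb : ∀ k ∈ s, 0 ≤ b k) (hc : ∀ k ∈ s, 0 ≤ c k)
    (hmin : ∀ t, 0 < t →
      ∑ k ∈ s, min (c k) t ≤ ∑ k ∈ s, min (a k) t + ∑ k ∈ s, min (b k) t) :
    ∑ k ∈ s, f (c k) ≤ ∑ k ∈ s, f (a k) + ∑ k ∈ s, f (b k) := by
  classical
  set T := s.image a ∪ s.image b ∪ s.image c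
  have hT : ∀ x ∈ T, 0 ≤ x := by
    simp only [T, mem_union, mem_image]
    rintro x ((⟨k, hk, rfl⟩ | ⟨k, hk, rfl⟩) | ⟨k, hk, rfl⟩)
    exacts [ha k hk, hb k hk, hc k hk]
  obtain ⟨w, hw, hfw⟩ := hf.exists_eq_sum_mul_min hf0 (T.erase 0)
    (fun t ht ↦ (hT t (mem_of_mem_erase ht)).lt_of_ne' (ne_of_mem_erase ht))
    (hmono.mono fun x hx ↦ by
      rcases mem_insert.1 hx with rfl | hx
      exacts [Set.mem_Ici.2 le_rfl, hT x (mem_of_mem_erase hx)])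
  have hsum (g : ι → ℝ) (hg : ∀ k ∈ s, g k ∈ T) :
      ∑ k ∈ s, f (g k) = ∑ t ∈ T.erase 0, w t * ∑ k ∈ s, min (g k) t := by
    simp_rw [mul_sum]
    rw [sum_comm]
    exact sum_congr rfl fun k hk ↦ hfw _ (insert_erase_subset 0 T (hg k hk))
  rw [hsum c fun k hk ↦ mem_union_right _ (mem_image_of_mem c hk),
    hsum a fun k hk ↦ mem_union_left _ (mem_union_left _ (mem_image_of_mem a hk)),
    hsum b fun k hk ↦ mem_union_left _ (mem_union_right _ (mem_image_of_mem b hk)),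
    ← sum_add_distrib]
  refine sum_le_sum fun t ht ↦ ?_
  rw [← mul_add]
  exact mul_le_mul_of_nonneg_left
    (hmin t ((hT t (mem_of_mem_erase ht)).lt_of_ne' (ne_of_mem_erase ht))) (hw t)

theorem StrictMonoOn.apply_add_le_apply_add {i : ℕ → ℕ} {a b : ℕ}
    (hi : StrictMonoOn i (Set.Icc a b)) {k l : ℕ} (hak : a ≤ k) (hkl : k ≤ l) (hlb : l ≤ b) : i k + l ≤ i l + k := by
  induction l, hkl using Nat.le_induction with
  | base => rfl
  | succ l hkl ih =>
    have := hi ⟨hak.trans hkl, by omega⟩ ⟨by omega, hlb⟩ l.lt_add_one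
    have := ih (by omega)
    omega

/-- Admissible index sequences `(i_1, …, i_m)`, `(j_1, …, j_m)`, read off `i j : ℕ → ℕ` on
`1, …, m`. -/
structure ThompsonFreedeIndices (n m : ℕ) (i j : ℕ → ℕ) : Prop where
  strictMonoOn_left : StrictMonoOn i (Set.Icc 1 m)
  strictMonoOn_right : StrictMonoOn j (Set.Icc 1 m)
  mapsTo_left : Set.MapsTo i (Set.Icc 1 m) (Set.Icc 1 n)
  mapsTo_right : Set.MapsTo j (Set.Icc 1 m) (Set.Icc 1 n)
  add_le : i m + j m ≤ n + m

/-- The `f`-version of the Thompson–Freede inequalities; `f = id` gives the inequalities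
themselves. -/
def ThompsonFreede (n : ℕ) (α β γ : ℕ → ℝ) (f : ℝ → ℝ) : Prop :=
  ∀ m ≤ n, ∀ i j, ThompsonFreedeIndices n m i j →
    ∑ k ∈ Finset.Icc 1 m, f (γ (i k + j k - k)) ≤
      ∑ k ∈ Finset.Icc 1 m, f (α (i k)) + ∑ k ∈ Finset.Icc 1 m, f (β (j k))

namespace ThompsonFreedeIndices

variable {n m : ℕ} {i j : ℕ → ℕ}

theorem sub_mem_Icc (h : ThompsonFreedeIndices n m i j) {k : ℕ} (hk : k ∈ Set.Icc 1 m) :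
    i k + j k - k ∈ Set.Icc 1 n := by
  obtain ⟨hk1, hkm⟩ := hk
  have := h.strictMonoOn_left.apply_add_le_apply_add hk1 hkm le_rfl
  have := h.strictMonoOn_right.apply_add_le_apply_add hk1 hkm le_rfl
  have := h.strictMonoOn_right.apply_add_le_apply_add le_rfl hk1 hkm
  have := (h.mapsTo_left ⟨hk1, hkm⟩).1
  have := (h.mapsTo_right ⟨le_rfl, hk1.trans hkm⟩).1
  have := h.add_le
  constructor <;> omega

theorem shift (h : ThompsonFreedeIndices n m i j) {p q r : ℕ} (hr0 : 0 < r) (hr : p + q + r ≤ m) :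
    ThompsonFreedeIndices n r (fun l ↦ i (p + l)) (fun l ↦ j (q + l)) := by
  have hshift : ∀ c, c + r ≤ m → Set.MapsTo (c + ·) (Set.Icc 1 r) (Set.Icc 1 m) :=
    fun c hc l hl ↦ by simp only [Set.mem_Icc] at hl ⊢; omega
  have hmono : ∀ c, StrictMonoOn (c + ·) (Set.Icc 1 r) := fun c _ _ _ _ h ↦ by simpa using h
  refine ⟨h.strictMonoOn_left.comp (hmono p) (hshift p (by omega)),
    h.strictMonoOn_right.comp (hmono q) (hshift q (by omega)),
    h.mapsTo_left.comp (hshift p (by omega)), h.mapsTo_right.comp (hshift q (by omega)), ?_⟩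
  have := h.strictMonoOn_left.apply_add_le_apply_add (show 1 ≤ p + r by omega)
    (show p + r ≤ m by omega) le_rfl
  have := h.strictMonoOn_right.apply_add_le_apply_add (show 1 ≤ q + r by omega)
    (show q + r ≤ m by omega) le_rfl
  have := h.add_le
  omega

end ThompsonFreedeIndices

theorem AntitoneOn.exists_sum_min_eq {a : ℕ → ℝ} {m : ℕ} (ha : AntitoneOn a (Set.Icc 1 m))
    (t : ℝ) : ∃ p ≤ m, ∑ k ∈ Finset.Icc 1 m, min (a k) t = p * t + ∑ k ∈ Ioc p m, a k := by
  induction m with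
  | zero => exact ⟨0, le_rfl, by simp⟩
  | succ m ih =>
    by_cases hlast : t < a (m + 1)
    · refine ⟨m + 1, le_rfl, ?_⟩
      have hmin : ∀ k ∈ Finset.Icc 1 (m + 1), min (a k) t = t := fun k hk ↦ by
        have hk := Finset.mem_Icc.1 hk
        exact min_eq_right (hlast.trans_le (ha hk (by simp [hk.1.trans hk.2]) hk.2)).le
      simp [sum_congr rfl hmin]
    · obtain ⟨p, hpm, hp⟩ := ih (ha.mono (Set.Icc_subset_Icc_right m.le_succ))
      refine ⟨p, hpm.trans m.le_succ, ?_⟩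
      rw [sum_Icc_succ_top (by omega), sum_Ioc_succ_top hpm, hp, min_eq_left (not_lt.1 hlast),
        add_assoc]

theorem sum_min_le_mul_add_sum_Ioc (c : ℕ → ℝ) {t : ℝ} (ht : 0 ≤ t) (m p : ℕ) :
    ∑ k ∈ Finset.Icc 1 m, min (c k) t ≤ p * t + ∑ k ∈ Ioc p m, c k := by
  rw [← sum_filter_add_sum_filter_not _ (· ≤ p)]
  have hhead : #{k ∈ Finset.Icc 1 m | k ≤ p} ≤ p := by
    simpa using card_le_card (s := {k ∈ Finset.Icc 1 m | k ≤ p}) (t := Finset.Icc 1 p)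
      (fun k hk ↦ by simp only [mem_filter, Finset.mem_Icc] at hk ⊢; omega)
  have htail : {k ∈ Finset.Icc 1 m | ¬k ≤ p} = Ioc p m := by
    ext k
    simp only [mem_filter, Finset.mem_Icc, mem_Ioc]
    omega
  gcongr
  · calc ∑ k ∈ Finset.Icc 1 m with k ≤ p, min (c k) t
        ≤ #{k ∈ Finset.Icc 1 m | k ≤ p} • t := sum_le_card_nsmul _ _ _ fun k _ ↦ min_le_right _ _
      _ ≤ p * t := by rw [nsmul_eq_mul]; gcongr
  · rw [htail]
    exact sum_le_sum fun k _ ↦ min_le_left _ _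

namespace ThompsonFreede

variable {n : ℕ} {α β γ : ℕ → ℝ}

theorem sum_Ioc_add_le (hTF : ThompsonFreede n α β γ id) (hα0 : ∀ k ∈ Set.Icc 1 n, 0 ≤ α k)
    (hβ0 : ∀ k ∈ Set.Icc 1 n, 0 ≤ β k) (hγ : AntitoneOn γ (Set.Icc 1 n)) {m : ℕ} (hmn : m ≤ n)
    {i j : ℕ → ℕ} (h : ThompsonFreedeIndices n m i j) (p q : ℕ) :
    ∑ k ∈ Ioc (p + q) m, γ (i k + j k - k) ≤
      ∑ k ∈ Ioc p m, α (i k) + ∑ k ∈ Ioc q m, β (j k) := by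
  have hαi : ∀ c, ∀ k ∈ Ioc c m, 0 ≤ α (i k) := fun c k hk ↦
    hα0 _ (h.mapsTo_left ⟨by have := (mem_Ioc.1 hk).1; omega, (mem_Ioc.1 hk).2⟩)
  have hβj : ∀ c, ∀ k ∈ Ioc c m, 0 ≤ β (j k) := fun c k hk ↦
    hβ0 _ (h.mapsTo_right ⟨by have := (mem_Ioc.1 hk).1; omega, (mem_Ioc.1 hk).2⟩)
  rcases le_or_gt m (p + q) with hm | hm
  · rw [Ioc_eq_empty (by omega), sum_empty]
    exact add_nonneg (sum_nonneg (hαi p)) (sum_nonneg (hβj q))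
  obtain ⟨r, rfl⟩ : ∃ r, m = p + q + r := ⟨m - (p + q), by omega⟩
  have hr := h.shift (p := p) (q := q) (r := r) (by omega) le_rfl
  have reindex (g : ℕ → ℝ) (c : ℕ) :
      ∑ k ∈ Ioc c (c + r), g k = ∑ l ∈ Finset.Icc 1 r, g (c + l) := by
    rw [← Finset.Icc_add_one_left_eq_Ioc, ← Finset.map_add_left_Icc, sum_map]
    rfl
  calc ∑ k ∈ Ioc (p + q) (p + q + r), γ (i k + j k - k)
      = ∑ l ∈ Finset.Icc 1 r, γ (i (p + q + l) + j (p + q + l) - (p + q + l)) := reindex _ _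
    _ ≤ ∑ l ∈ Finset.Icc 1 r, γ (i (p + l) + j (q + l) - l) := by
        refine sum_le_sum fun l hl ↦ ?_
        obtain ⟨hl1, hlr⟩ := Finset.mem_Icc.1 hl
        have := h.strictMonoOn_left.apply_add_le_apply_add (show 1 ≤ p + l by omega)
          (show p + l ≤ p + q + l by omega) (by omega)
        have := h.strictMonoOn_right.apply_add_le_apply_add (show 1 ≤ q + l by omega)
          (show q + l ≤ p + q + l by omega) (by omega)
        exact hγ (hr.sub_mem_Icc ⟨hl1, hlr⟩) (h.sub_mem_Icc ⟨by omega, by omega⟩) (by omega)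
    _ ≤ ∑ l ∈ Finset.Icc 1 r, α (i (p + l)) + ∑ l ∈ Finset.Icc 1 r, β (j (q + l)) :=
        hTF r (by omega) _ _ hr
    _ = ∑ k ∈ Ioc p (p + r), α (i k) + ∑ k ∈ Ioc q (q + r), β (j k) := by
        rw [reindex, reindex]
    _ ≤ ∑ k ∈ Ioc p (p + q + r), α (i k) + ∑ k ∈ Ioc q (p + q + r), β (j k) :=
        add_le_add
          (sum_le_sum_of_subset_of_nonneg (Ioc_subset_Ioc_right (by omega)) fun k hk _ ↦ hαi p k hk)
          (sum_le_sum_of_subset_of_nonneg (Ioc_subset_Ioc_right (by omega)) fun k hk _ ↦ hβj q k hk)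

theorem min_const (hTF : ThompsonFreede n α β γ id) (hα0 : ∀ k ∈ Set.Icc 1 n, 0 ≤ α k)
    (hβ0 : ∀ k ∈ Set.Icc 1 n, 0 ≤ β k) (hα : AntitoneOn α (Set.Icc 1 n))
    (hβ : AntitoneOn β (Set.Icc 1 n)) (hγ : AntitoneOn γ (Set.Icc 1 n)) {t : ℝ} (ht : 0 ≤ t) :
    ThompsonFreede n α β γ (min · t) := by
  intro m hmn i j h
  -- `p` and `q` count the terms of `α ∘ i` and `β ∘ j` exceeding `t`.
  obtain ⟨p, -, hp⟩ := (hα.comp_MonotoneOn h.strictMonoOn_left.monotoneOn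
    h.mapsTo_left).exists_sum_min_eq t
  obtain ⟨q, -, hq⟩ := (hβ.comp_MonotoneOn h.strictMonoOn_right.monotoneOn
    h.mapsTo_right).exists_sum_min_eq t
  calc ∑ k ∈ Finset.Icc 1 m, min (γ (i k + j k - k)) t
      ≤ (p + q : ℕ) * t + ∑ k ∈ Ioc (p + q) m, γ (i k + j k - k) :=
        sum_min_le_mul_add_sum_Ioc _ ht m (p + q)
    _ ≤ (p + q : ℕ) * t + (∑ k ∈ Ioc p m, α (i k) + ∑ k ∈ Ioc q m, β (j k)) := by
        gcongr
        exact hTF.sum_Ioc_add_le hα0 hβ0 hγ hmn h p q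
    _ = ∑ k ∈ Finset.Icc 1 m, min (α (i k)) t + ∑ k ∈ Finset.Icc 1 m, min (β (j k)) t := by
        simp only [Function.comp_apply] at hp hq
        rw [hp, hq]
        push_cast
        ring

theorem of_concaveOn (hTF : ThompsonFreede n α β γ id)
    (hα0 : ∀ k ∈ Set.Icc 1 n, 0 ≤ α k) (hβ0 : ∀ k ∈ Set.Icc 1 n, 0 ≤ β k)
    (hγ0 : ∀ k ∈ Set.Icc 1 n, 0 ≤ γ k) (hα : AntitoneOn α (Set.Icc 1 n))
    (hβ : AntitoneOn β (Set.Icc 1 n)) (hγ : AntitoneOn γ (Set.Icc 1 n)) {f : ℝ → ℝ}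
    (hf : ConcaveOn ℝ (Set.Ici 0) f) (hf0 : f 0 = 0) (hmono : MonotoneOn f (Set.Ici 0)) :
    ThompsonFreede n α β γ f := fun m hmn i j h ↦
  hf.sum_le_sum_add_sum_of_sum_min_le hf0 hmono
    (fun _ hk ↦ hα0 _ (h.mapsTo_left (Finset.mem_Icc.1 hk)))
    (fun _ hk ↦ hβ0 _ (h.mapsTo_right (Finset.mem_Icc.1 hk)))
    (fun _ hk ↦ hγ0 _ (h.sub_mem_Icc (Finset.mem_Icc.1 hk)))
    fun _ ht ↦ hTF.min_const hα0 hβ0 hα hβ hγ ht.le m hmn i j h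

end ThompsonFreede

theorem stmt3 {n : ℕ} (α β γ : ℕ → ℝ)
    (hα0 : ∀ k, 1 ≤ k → k ≤ n → 0 ≤ α k)
    (hβ0 : ∀ k, 1 ≤ k → k ≤ n → 0 ≤ β k)
    (hγ0 : ∀ k, 1 ≤ k → k ≤ n → 0 ≤ γ k)
    (hα : ∀ k l, 1 ≤ k → k ≤ l → l ≤ n → α l ≤ α k)
    (hβ : ∀ k l, 1 ≤ k → k ≤ l → l ≤ n → β l ≤ β k)
    (hγ : ∀ k l, 1 ≤ k → k ≤ l → l ≤ n → γ l ≤ γ k)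
    (hTF : ∀ m : ℕ, m ≤ n → ∀ i j : ℕ → ℕ,
      StrictMonoOn i (Set.Icc 1 m) → StrictMonoOn j (Set.Icc 1 m) →
      (∀ k, 1 ≤ k → k ≤ m → 1 ≤ i k ∧ i k ≤ n) →
      (∀ k, 1 ≤ k → k ≤ m → 1 ≤ j k ∧ j k ≤ n) →
      i m + j m ≤ n + m →
      ∑ k ∈ Finset.Icc 1 m, γ (i k + j k - k) ≤
        ∑ k ∈ Finset.Icc 1 m, α (i k) + ∑ k ∈ Finset.Icc 1 m, β (j k))
    (f : ℝ → ℝ)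
    (hconc : ConcaveOn ℝ (Set.Ici 0) f) (hf0 : f 0 = 0)
    (hfnonneg : ∀ x : ℝ, 0 ≤ x → 0 ≤ f x) :
    ∀ m : ℕ, m ≤ n → ∀ i j : ℕ → ℕ,
      StrictMonoOn i (Set.Icc 1 m) → StrictMonoOn j (Set.Icc 1 m) →
      (∀ k, 1 ≤ k → k ≤ m → 1 ≤ i k ∧ i k ≤ n) →
      (∀ k, 1 ≤ k → k ≤ m → 1 ≤ j k ∧ j k ≤ n) →
      i m + j m ≤ n + m →
      ∑ k ∈ Finset.Icc 1 m, f (γ (i k + j k - k)) ≤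
        ∑ k ∈ Finset.Icc 1 m, f (α (i k)) + ∑ k ∈ Finset.Icc 1 m, f (β (j k)) := by
  have hTF' : ThompsonFreede n α β γ id := fun m hmn i j h ↦
    hTF m hmn i j h.strictMonoOn_left h.strictMonoOn_right (fun k h₁ h₂ ↦ h.mapsTo_left ⟨h₁, h₂⟩)
      (fun k h₁ h₂ ↦ h.mapsTo_right ⟨h₁, h₂⟩) h.add_le
  have hfTF := hTF'.of_concaveOn (fun k hk ↦ hα0 k hk.1 hk.2) (fun k hk ↦ hβ0 k hk.1 hk.2)
    (fun k hk ↦ hγ0 k hk.1 hk.2) (fun k hk l hl hkl ↦ hα k l hk.1 hkl hl.2)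
    (fun k hk l hl hkl ↦ hβ k l hk.1 hkl hl.2) (fun k hk l hl hkl ↦ hγ k l hk.1 hkl hl.2)
    hconc hf0 (hconc.monotoneOn_Ici_of_nonneg hfnonneg)
  intro m hmn i j hi hj hib hjb hij
  exact hfTF m hmn i j ⟨hi, hj, fun k hk ↦ hib k hk.1 hk.2, fun k hk ↦ hjb k hk.1 hk.2, hij⟩
end

section
/- Let α(1) ≥ α(2) ≥ … ≥ α(n), β(1) ≥ … ≥ β(n), γ(1) ≥ … ≥ γ(n) be three non-increasing sequences of non-negative real numbers that satisfy all Thompson–Freede inequalities. Let m ≤ n, and let (i_1,…,i_m) and (j_1,…,j_m) be strictly increasing sequences of integers in {1,…,n} with i_m + j_m ≤ n + m. Then for any integers a, b ≥ 1 with a + b − 1 ≤ m, one has ∑_{k=a+b−1}^{m} γ(i_k + j_k − k) ≤ ∑_{k=a}^{m−b+1} α(i_k) + ∑_{k=b}^{m−a+1} β(j_k). -/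
/-!
Apply the Thompson–Freede inequality of length `m + 2 - a - b` to the windows
`t ↦ i (t + a - 1)` and `t ↦ j (t + b - 1)`. The window sums of `α` and `β` are exactly the
right-hand side, and since strictly increasing integer sequences grow by at least one per step,
`i (t + a - 1) + j (t + b - 1) - t ≤ i k + j k - k` for `k = t + a + b - 2`; as `γ` is
non-increasing, the left-hand side of the window inequality dominates the one claimed.
-/

theorem Finset.sum_Icc_add' {α M : Type*} [AddCommMonoid M] [AddCommMonoid α] [PartialOrder α]
    [IsOrderedCancelAddMonoid α] [ExistsAddOfLE α] [LocallyFiniteOrder α]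
    (f : α → M) (a b c : α) :
    ∑ x ∈ Icc a b, f (x + c) = ∑ x ∈ Icc (a + c) (b + c), f x := by
  rw [← map_add_right_Icc, sum_map]
  rfl

namespace StrictMonoOn

variable {p q : ℕ}

theorem add_sub_le_apply {f : ℕ → ℕ} (hf : StrictMonoOn f (Set.Icc p q)) {k l : ℕ}
    (hpk : p ≤ k) (hkl : k ≤ l) (hlq : l ≤ q) : f k + (l - k) ≤ f l := by
  induction l, hkl using Nat.le_induction with
  | base => simp
  | succ l hkl ih =>
    have hstep : f l < f (l + 1) := hf ⟨by omega, by omega⟩ ⟨by omega, hlq⟩ l.lt_succ_self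
    have := ih (by omega)
    omega

theorem comp_add_right {β : Type*} [Preorder β] {f : ℕ → β} {c : ℕ}
    (hf : StrictMonoOn f (Set.Icc (p + c) (q + c))) :
    StrictMonoOn (fun t => f (t + c)) (Set.Icc p q) :=
  hf.comp (add_left_strictMono.strictMonoOn _) fun _ ht => ⟨by simp [ht.1], by simp [ht.2]⟩

end StrictMonoOn

theorem window_add_window_add_le {i j : ℕ → ℕ} {m A B t : ℕ}
    (hi : StrictMonoOn i (Set.Icc 1 m)) (hj : StrictMonoOn j (Set.Icc 1 m))
    (ht : 1 ≤ t) (htm : t + (A + B) ≤ m) :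
    i (t + A) + j (t + B) + (A + B) ≤ i (t + (A + B)) + j (t + (A + B)) := by
  have := hi.add_sub_le_apply (k := t + A) (l := t + (A + B)) (by omega) (by omega) htm
  have := hj.add_sub_le_apply (k := t + B) (l := t + (A + B)) (by omega) (by omega) htm
  omega

theorem stmt4_general {n : ℕ} (α β γ : ℕ → ℝ)
    (hγ : ∀ k l, 1 ≤ k → k ≤ l → l ≤ n → γ l ≤ γ k)
    (hTF : ∀ m : ℕ, m ≤ n → ∀ i j : ℕ → ℕ,
      StrictMonoOn i (Set.Icc 1 m) → StrictMonoOn j (Set.Icc 1 m) →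
      (∀ k, 1 ≤ k → k ≤ m → 1 ≤ i k ∧ i k ≤ n) →
      (∀ k, 1 ≤ k → k ≤ m → 1 ≤ j k ∧ j k ≤ n) →
      i m + j m ≤ n + m →
      ∑ k ∈ Finset.Icc 1 m, γ (i k + j k - k) ≤
        ∑ k ∈ Finset.Icc 1 m, α (i k) + ∑ k ∈ Finset.Icc 1 m, β (j k))
    (m : ℕ) (hm : m ≤ n) (i j : ℕ → ℕ)
    (hi : StrictMonoOn i (Set.Icc 1 m)) (hj : StrictMonoOn j (Set.Icc 1 m))
    (hiran : ∀ k, 1 ≤ k → k ≤ m → 1 ≤ i k ∧ i k ≤ n)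
    (hjran : ∀ k, 1 ≤ k → k ≤ m → 1 ≤ j k ∧ j k ≤ n)
    (hconstr : i m + j m ≤ n + m)
    (a b : ℕ) (ha : 1 ≤ a) (hb : 1 ≤ b) (hab : a + b - 1 ≤ m) :
    ∑ k ∈ Finset.Icc (a + b - 1) m, γ (i k + j k - k) ≤
      ∑ k ∈ Finset.Icc a (m + 1 - b), α (i k) +
        ∑ k ∈ Finset.Icc b (m + 1 - a), β (j k) := by
  obtain ⟨A, rfl⟩ : ∃ A, a = A + 1 := ⟨a - 1, by omega⟩
  obtain ⟨B, rfl⟩ : ∃ B, b = B + 1 := ⟨b - 1, by omega⟩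
  obtain ⟨M, rfl⟩ : ∃ M, m = M + (A + B) := ⟨m - (A + B), by omega⟩
  have hwindow := hTF M (by omega) (fun t => i (t + A)) (fun t => j (t + B))
    ((hi.mono (Set.Icc_subset_Icc (by omega) (by omega))).comp_add_right)
    ((hj.mono (Set.Icc_subset_Icc (by omega) (by omega))).comp_add_right)
    (fun k hk hkM => hiran (k + A) (by omega) (by omega))
    (fun k hk hkM => hjran (k + B) (by omega) (by omega))
    (by have := window_add_window_add_le (A := A) (B := B) (t := M) hi hj (by omega) le_rfl; omega)
  rw [show A + 1 + (B + 1) - 1 = 1 + (A + B) by omega,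
    show M + (A + B) + 1 - (B + 1) = M + A by omega,
    show M + (A + B) + 1 - (A + 1) = M + B by omega, add_comm A 1, add_comm B 1,
    ← Finset.sum_Icc_add' (fun k => γ (i k + j k - k)),
    ← Finset.sum_Icc_add' (fun k => α (i k)), ← Finset.sum_Icc_add' (fun k => β (j k))]
  refine le_trans (Finset.sum_le_sum fun t ht => ?_) hwindow
  obtain ⟨ht1, htM⟩ := Finset.mem_Icc.1 ht
  have := window_add_window_add_le (A := A) (B := B) hi hj ht1 (by omega)
  have := hi.add_sub_le_apply (k := 1) (l := t + A) le_rfl (by omega) (by omega)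
  have := hi.add_sub_le_apply (k := t + (A + B)) (l := M + (A + B)) (by omega) (by omega) le_rfl
  have := hj.add_sub_le_apply (k := t + (A + B)) (l := M + (A + B)) (by omega) (by omega) le_rfl
  have := (hiran 1 le_rfl (by omega)).1
  have := (hjran (t + B) (by omega) (by omega)).1
  apply hγ <;> omega

theorem stmt4 {n : ℕ} (α β γ : ℕ → ℝ)
    (hα0 : ∀ k, 1 ≤ k → k ≤ n → 0 ≤ α k)
    (hβ0 : ∀ k, 1 ≤ k → k ≤ n → 0 ≤ β k)
    (hγ0 : ∀ k, 1 ≤ k → k ≤ n → 0 ≤ γ k)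
    (hα : ∀ k l, 1 ≤ k → k ≤ l → l ≤ n → α l ≤ α k)
    (hβ : ∀ k l, 1 ≤ k → k ≤ l → l ≤ n → β l ≤ β k)
    (hγ : ∀ k l, 1 ≤ k → k ≤ l → l ≤ n → γ l ≤ γ k)
    (hTF : ∀ m : ℕ, m ≤ n → ∀ i j : ℕ → ℕ,
      StrictMonoOn i (Set.Icc 1 m) → StrictMonoOn j (Set.Icc 1 m) →
      (∀ k, 1 ≤ k → k ≤ m → 1 ≤ i k ∧ i k ≤ n) →
      (∀ k, 1 ≤ k → k ≤ m → 1 ≤ j k ∧ j k ≤ n) →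
      i m + j m ≤ n + m →
      ∑ k ∈ Finset.Icc 1 m, γ (i k + j k - k) ≤
        ∑ k ∈ Finset.Icc 1 m, α (i k) + ∑ k ∈ Finset.Icc 1 m, β (j k))
    (m : ℕ) (hm : m ≤ n) (i j : ℕ → ℕ)
    (hi : StrictMonoOn i (Set.Icc 1 m)) (hj : StrictMonoOn j (Set.Icc 1 m))
    (hiran : ∀ k, 1 ≤ k → k ≤ m → 1 ≤ i k ∧ i k ≤ n)
    (hjran : ∀ k, 1 ≤ k → k ≤ m → 1 ≤ j k ∧ j k ≤ n)
    (hconstr : i m + j m ≤ n + m)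
    (a b : ℕ) (ha : 1 ≤ a) (hb : 1 ≤ b) (hab : a + b - 1 ≤ m) :
    ∑ k ∈ Finset.Icc (a + b - 1) m, γ (i k + j k - k) ≤
      ∑ k ∈ Finset.Icc a (m + 1 - b), α (i k) +
        ∑ k ∈ Finset.Icc b (m + 1 - a), β (j k) :=
  stmt4_general α β γ hγ hTF m hm i j hi hj hiran hjran hconstr a b ha hb hab
end

section
/- Let A and B be n×n complex matrices, with singular values α(i) = σ_i(A), β(i) = σ_i(B), and γ(i) = σ_i(A+B) in non-increasing order. Let b ≥ 1 be an integer, let K₃ and K₄ be disjoint finite index sets, and for each k ∈ K₃ ∪ K₄ let (t_k, s_k) be a pair of integers with 1 ≤ t_k ≤ s_k ≤ n and s_k − t_k ≥ b − 1, such that all the t_k for k ∈ K₃ are distinct, all the s_k for k ∈ K₄ are distinct, and the sets {t_k : k ∈ K₃} and {s_k : k ∈ K₄} are disjoint. Set r = |K₃| + |K₄|, and assume b + r − 1 ≤ n. Then ∑_{k∈K₃} γ(s_k) − ∑_{k∈K₄} γ(t_k) ≤ ∑_{k∈K₃} α(t_k) − ∑_{k∈K₄} α(s_k) + ∑_{k=b}^{b+r−1}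 β(k). -/
/-- `svals M k` is the `k`-th largest singular value of `M` (1-based indexing `k = 1,…,n`). -/
noncomputable def svals {n : ℕ} (M : Matrix (Fin n) (Fin n) ℂ) (k : ℕ) : ℝ :=
  let e : Fin n → ℝ := fun i =>
    Real.sqrt ((Matrix.isHermitian_conjTranspose_mul_self M).eigenvalues i)
  if h : k - 1 < n then e (Tuple.sort e (Fin.rev ⟨k - 1, h⟩)) else 0

/-!
Singular values become eigenvalues through the dilation `(x, y) ↦ (T† y, T x)` of `T : E → F` on
`E × F`: it is symmetric and additive in `T`, and by min–max together with the symmetry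
`(x, y) ↦ (x, -y)` its eigenvalues in decreasing order are `σ₀(T), σ₁(T), …` at the top and
`…, -σ₁(T), -σ₀(T)` at the bottom. Placing the `K₃`-terms in the top half and the `K₄`-terms in
the bottom half, the claim becomes an eigenvalue inequality for symmetric `X`, `Y`: for injective
`p` and `q k ≥ p k + d`,
`∑ₖ (λ_{q k}(X + Y) - λ_{p k}(X)) ≤ λ_d(Y) + ⋯ + λ_{d+r-1}(Y)`.
Let `ν = λ_{d+r-1}(Y)` and let `P ≥ 0` be the part of `Y - ν` above zero on the eigenvectors
`d, …, d+r-1`. Then `Y ≤ P + ν` on a subspace of codimension `d`, so min–max gives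
`λ_{q k}(X + Y) ≤ λ_{p k}(X + P) + ν`, while the increments `λᵢ(X + P) - λᵢ(X)` are nonnegative
and add up to `tr P = ∑ (λᵢ(Y) - ν)`.
-/

open Module InnerProductSpace Finset
open scoped InnerProductSpace

section FiniteDimensional

variable {K V W : Type*} [DivisionRing K] [AddCommGroup V] [Module K V] [AddCommGroup W]
  [Module K W] [FiniteDimensional K V] [FiniteDimensional K W]

theorem Submodule.finrank_add_finrank_le_finrank_inf_add (S S' : Submodule K V) :
    finrank K S + finrank K S' ≤ finrank K ↥(S ⊓ S') + finrank K V := by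
  have := Submodule.finrank_sup_add_finrank_inf_eq S S'
  have := (S ⊔ S').finrank_le
  omega

theorem Submodule.exists_mem_inf_ne_zero_of_finrank_lt (S S' : Submodule K V)
    (h : finrank K V < finrank K S + finrank K S') : ∃ x ∈ S ⊓ S', x ≠ 0 := by
  have := S.finrank_add_finrank_le_finrank_inf_add S'
  obtain ⟨⟨x, hx⟩, hx0⟩ := finrank_pos_iff_exists_ne_zero.mp (by omega : 0 < finrank K ↥(S ⊓ S'))
  exact ⟨x, hx, fun h => hx0 (Subtype.ext h)⟩

theorem Submodule.finrank_add_finrank_le_finrank_comap_add (f : V →ₗ[K] W) (S : Submodule K W) :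
    finrank K V + finrank K S ≤ finrank K (S.comap f) + finrank K W := by
  have h := (S.mkQ ∘ₗ f).finrank_range_add_finrank_ker
  rw [LinearMap.ker_comp, S.ker_mkQ] at h
  have := (S.mkQ ∘ₗ f).range.finrank_le
  have := S.finrank_quotient_add_finrank
  omega

theorem WithLp.finrank_prod (p : ENNReal) :
    finrank K (WithLp p (V × W)) = finrank K V + finrank K W := by
  rw [(WithLp.linearEquiv p K (V × W)).finrank_eq, Module.finrank_prod]

end FiniteDimensional

variable {𝕜 E : Type*} [RCLike 𝕜] [NormedAddCommGroup E] [InnerProductSpace 𝕜 E]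

namespace OrthonormalBasis

variable {ι : Type*} [Fintype ι] (b : OrthonormalBasis ι 𝕜 E)

theorem inner_eq_zero_of_mem_span {s : Set ι} {i : ι} (hi : i ∉ s) {x : E}
    (hx : x ∈ Submodule.span 𝕜 (b '' s)) : ⟪b i, x⟫_𝕜 = 0 := by
  refine Submodule.span_le (p := LinearMap.ker (innerₛₗ 𝕜 (b i))) |>.mpr ?_ hx
  rintro _ ⟨j, hj, rfl⟩
  exact b.orthonormal.2 (ne_of_mem_of_not_mem hj hi).symm

theorem finrank_span_image (s : Finset ι) : finrank 𝕜 (Submodule.span 𝕜 (b '' s)) = #s := by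
  rw [Set.image_eq_range]
  exact (finrank_span_eq_card (b.orthonormal.linearIndependent.comp _ Subtype.val_injective)).trans
    (Fintype.card_coe s)

variable (g : ι → ℝ)

noncomputable def diagonalMap : E →ₗ[𝕜] E :=
  ∑ i, (g i : 𝕜) • (rankOne 𝕜 (b i) (b i) : E →ₗ[𝕜] E)

theorem diagonalMap_apply (x : E) :
    b.diagonalMap g x = ∑ i, ((g i : 𝕜) * ⟪b i, x⟫_𝕜) • b i := by
  simp [diagonalMap, mul_smul]

theorem diagonalMap_apply_self [DecidableEq ι] (j : ι) :
    b.diagonalMap g (b j) = (g j : 𝕜) • b j := by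
  simp [diagonalMap_apply, b.inner_eq_ite]

theorem isSymmetric_diagonalMap : (b.diagonalMap g).IsSymmetric := fun x y => by
  simp only [diagonalMap_apply, sum_inner, inner_sum, inner_smul_left, inner_smul_right,
    RCLike.conj_ofReal, map_mul, inner_conj_symm]
  exact sum_congr rfl fun i _ => by ring

theorem trace_diagonalMap [FiniteDimensional 𝕜 E] :
    LinearMap.trace 𝕜 E (b.diagonalMap g) = ∑ i, (g i : 𝕜) := by
  simp [diagonalMap, map_sum, InnerProductSpace.trace_rankOne, b.orthonormal.1]

end OrthonormalBasis

namespace LinearMap.IsSymmetric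

variable {T : E →ₗ[𝕜] E}

theorem re_inner_apply_self_eq_sum (hT : T.IsSymmetric) {ι : Type*} [Fintype ι]
    (b : OrthonormalBasis ι 𝕜 E) {g : ι → ℝ} (hb : ∀ i, T (b i) = (g i : 𝕜) • b i) (x : E) :
    RCLike.re ⟪T x, x⟫_𝕜 = ∑ i, g i * ‖⟪b i, x⟫_𝕜‖ ^ 2 := by
  rw [← b.sum_inner_mul_inner (T x) x, map_sum]
  refine sum_congr rfl fun i _ => ?_
  rw [hT, hb, inner_smul_right, mul_assoc, ← inner_conj_symm, RCLike.conj_mul,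
    ← RCLike.ofReal_pow, RCLike.re_ofReal_mul, RCLike.ofReal_re]

theorem eigenvalues_congr [FiniteDimensional 𝕜 E] {T' : E →ₗ[𝕜] E} (hT : T.IsSymmetric)
    (hT' : T'.IsSymmetric) (h : T = T') {m m' : ℕ} (hm : finrank 𝕜 E = m)
    (hm' : finrank 𝕜 E = m') (i : Fin m) :
    hT.eigenvalues hm i = hT'.eigenvalues hm' (Fin.cast (hm.symm.trans hm') i) := by
  subst h hm hm'
  rfl

variable (hT : T.IsSymmetric) [FiniteDimensional 𝕜 E] {m : ℕ} (hm : finrank 𝕜 E = m)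

theorem re_inner_apply_self_le_of_mem_span {s : Finset (Fin m)} {c : ℝ}
    (hc : ∀ i ∈ s, hT.eigenvalues hm i ≤ c) {x : E}
    (hx : x ∈ Submodule.span 𝕜 (hT.eigenvectorBasis hm '' s)) :
    RCLike.re ⟪T x, x⟫_𝕜 ≤ c * ‖x‖ ^ 2 := by
  rw [hT.re_inner_apply_self_eq_sum _ (hT.apply_eigenvectorBasis hm),
    ← (hT.eigenvectorBasis hm).sum_sq_norm_inner_right, mul_sum]
  refine sum_le_sum fun i _ => ?_
  by_cases hi : i ∈ s
  · exact mul_le_mul_of_nonneg_right (hc i hi) (by positivity)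
  · simp [(hT.eigenvectorBasis hm).inner_eq_zero_of_mem_span (s := s) hi hx]

theorem le_re_inner_apply_self_of_mem_span {s : Finset (Fin m)} {c : ℝ}
    (hc : ∀ i ∈ s, c ≤ hT.eigenvalues hm i) {x : E}
    (hx : x ∈ Submodule.span 𝕜 (hT.eigenvectorBasis hm '' s)) :
    c * ‖x‖ ^ 2 ≤ RCLike.re ⟪T x, x⟫_𝕜 := by
  rw [hT.re_inner_apply_self_eq_sum _ (hT.apply_eigenvectorBasis hm),
    ← (hT.eigenvectorBasis hm).sum_sq_norm_inner_right, mul_sum]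
  refine sum_le_sum fun i _ => ?_
  by_cases hi : i ∈ s
  · exact mul_le_mul_of_nonneg_right (hc i hi) (by positivity)
  · simp [(hT.eigenvectorBasis hm).inner_eq_zero_of_mem_span (s := s) hi hx]

theorem le_eigenvalues_of_forall_le {k : Fin m} {S : Submodule 𝕜 E}
    (hS : k + 1 ≤ finrank 𝕜 S) {c : ℝ} (h : ∀ x ∈ S, c * ‖x‖ ^ 2 ≤ RCLike.re ⟪T x, x⟫_𝕜) :
    c ≤ hT.eigenvalues hm k := by
  set W := Submodule.span 𝕜 (hT.eigenvectorBasis hm '' (Ici k : Finset (Fin m)))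
  obtain ⟨x, hx, hx0⟩ := S.exists_mem_inf_ne_zero_of_finrank_lt W (by
    rw [(hT.eigenvectorBasis hm).finrank_span_image, Fin.card_Ici, hm]; omega)
  have hxW := hT.re_inner_apply_self_le_of_mem_span hm
    (fun i hi => hT.eigenvalues_antitone hm (mem_Ici.mp hi)) hx.2
  exact le_of_mul_le_mul_right ((h x hx.1).trans hxW) (by positivity)

theorem eigenvalues_le_of_forall_le {k : Fin m} {S : Submodule 𝕜 E}
    (hS : m ≤ finrank 𝕜 S + k) {c : ℝ} (h : ∀ x ∈ S, RCLike.re ⟪T x, x⟫_𝕜 ≤ c * ‖x‖ ^ 2) :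
    hT.eigenvalues hm k ≤ c := by
  set W := Submodule.span 𝕜 (hT.eigenvectorBasis hm '' (Iic k : Finset (Fin m)))
  obtain ⟨x, hx, hx0⟩ := S.exists_mem_inf_ne_zero_of_finrank_lt W (by
    rw [(hT.eigenvectorBasis hm).finrank_span_image, Fin.card_Iic, hm]; omega)
  have hxW := hT.le_re_inner_apply_self_of_mem_span hm
    (fun i hi => hT.eigenvalues_antitone hm (mem_Iic.mp hi)) hx.2
  exact le_of_mul_le_mul_right (hxW.trans (h x hx.1)) (by positivity)

theorem eigenvalues_le_eigenvalues_add_of_forall_le {T' : E →ₗ[𝕜] E} (hT' : T'.IsSymmetric)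
    {Z : Submodule 𝕜 E} {j : ℕ} (hZ : m ≤ finrank 𝕜 Z + j) {c : ℝ}
    (h : ∀ x ∈ Z, RCLike.re ⟪T' x, x⟫_𝕜 ≤ RCLike.re ⟪T x, x⟫_𝕜 + c * ‖x‖ ^ 2)
    {k l : Fin m} (hkl : k + j ≤ l) :
    hT'.eigenvalues hm l ≤ hT.eigenvalues hm k + c := by
  set W := Submodule.span 𝕜 (hT.eigenvectorBasis hm '' (Ici k : Finset (Fin m)))
  have hW : finrank 𝕜 W = m - k := by
    rw [(hT.eigenvectorBasis hm).finrank_span_image, Fin.card_Ici]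
  have := Z.finrank_add_finrank_le_finrank_inf_add W
  refine hT'.eigenvalues_le_of_forall_le hm (S := Z ⊓ W) (by omega) fun x hx => ?_
  have := hT.re_inner_apply_self_le_of_mem_span hm
    (fun i hi => hT.eigenvalues_antitone hm (mem_Ici.mp hi)) hx.2
  linarith [h x hx.1]

theorem eigenvalues_rev_eq_neg_of_re_inner_map_self (U : E ≃ₗᵢ[𝕜] E)
    (hU : ∀ x, RCLike.re ⟪T (U x), U x⟫_𝕜 = -RCLike.re ⟪T x, x⟫_𝕜) (i : Fin m) :
    hT.eigenvalues hm i.rev = -hT.eigenvalues hm i := by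
  set v := hT.eigenvectorBasis hm
  set spanMap : Finset (Fin m) → Submodule 𝕜 E := fun s =>
    (Submodule.span 𝕜 (v '' s)).map (U.toLinearEquiv : E →ₗ[𝕜] E)
  have hspanMap (s : Finset (Fin m)) : finrank 𝕜 (spanMap s) = #s := by
    rw [LinearEquiv.finrank_map_eq, v.finrank_span_image]
  apply le_antisymm
  · refine hT.eigenvalues_le_of_forall_le hm (S := spanMap (Iic i))
      (by rw [hspanMap, Fin.card_Iic, Fin.val_rev]; omega) fun x hx => ?_
    obtain ⟨y, hy, rfl⟩ := Submodule.mem_map.mp hx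
    have := hT.le_re_inner_apply_self_of_mem_span hm
      (fun j hj => hT.eigenvalues_antitone hm (mem_Iic.mp hj)) hy
    simp only [LinearEquiv.coe_coe, LinearIsometryEquiv.coe_toLinearEquiv, hU,
      LinearIsometryEquiv.norm_map]
    linarith
  · refine hT.le_eigenvalues_of_forall_le hm (S := spanMap (Ici i))
      (by rw [hspanMap, Fin.card_Ici, Fin.val_rev]; omega) fun x hx => ?_
    obtain ⟨y, hy, rfl⟩ := Submodule.mem_map.mp hx
    have := hT.re_inner_apply_self_le_of_mem_span hm
      (fun j hj => hT.eigenvalues_antitone hm (mem_Ici.mp hj)) hy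
    simp only [LinearEquiv.coe_coe, LinearIsometryEquiv.coe_toLinearEquiv, hU,
      LinearIsometryEquiv.norm_map]
    linarith

variable {X P Y : E →ₗ[𝕜] E}

theorem eigenvalues_le_eigenvalues_add_of_nonneg (hX : X.IsSymmetric) (hP : P.IsSymmetric)
    (hP0 : ∀ x, 0 ≤ RCLike.re ⟪P x, x⟫_𝕜) (i : Fin m) :
    hX.eigenvalues hm i ≤ (hX.add hP).eigenvalues hm i := by
  refine add_zero ((hX.add hP).eigenvalues hm i) ▸
    (hX.add hP).eigenvalues_le_eigenvalues_add_of_forall_le hm hX (Z := ⊤) (j := 0)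
      (by simp [hm]) (fun x _ => ?_) le_rfl
  simp only [add_apply, inner_add_left, map_add, zero_mul, add_zero]
  exact le_add_of_nonneg_right (hP0 x)

theorem sum_eigenvalues_add_sub_le_re_trace (hX : X.IsSymmetric) (hP : P.IsSymmetric)
    (hP0 : ∀ x, 0 ≤ RCLike.re ⟪P x, x⟫_𝕜) {ι : Type*} {K : Finset ι} {p : ι → Fin m}
    (hp : Set.InjOn p K) :
    ∑ k ∈ K, ((hX.add hP).eigenvalues hm (p k) - hX.eigenvalues hm (p k)) ≤
      RCLike.re (trace 𝕜 E P) := by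
  rw [← sum_image (f := fun i => (hX.add hP).eigenvalues hm i - hX.eigenvalues hm i) hp]
  calc _ ≤ ∑ i, ((hX.add hP).eigenvalues hm i - hX.eigenvalues hm i) :=
        sum_le_sum_of_subset_of_nonneg (subset_univ _) fun i _ _ =>
          sub_nonneg.mpr (eigenvalues_le_eigenvalues_add_of_nonneg hm hX hP hP0 i)
    _ = RCLike.re (trace 𝕜 E P) := by
        rw [sum_sub_distrib, ← re_trace_eq_sum_eigenvalues, ← re_trace_eq_sum_eigenvalues,
          map_add, map_add, add_sub_cancel_left]

theorem exists_windowed_positive_part (hY : Y.IsSymmetric) (a c : Fin m) :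
    ∃ P : E →ₗ[𝕜] E, ∃ _ : P.IsSymmetric, (∀ x, 0 ≤ RCLike.re ⟪P x, x⟫_𝕜) ∧
      (∀ x ∈ Submodule.span 𝕜 (hY.eigenvectorBasis hm '' (Ici a : Finset (Fin m))),
        RCLike.re ⟪Y x, x⟫_𝕜 ≤ RCLike.re ⟪P x, x⟫_𝕜 + hY.eigenvalues hm c * ‖x‖ ^ 2) ∧
      RCLike.re (trace 𝕜 E P) = ∑ i ∈ Icc a c, (hY.eigenvalues hm i - hY.eigenvalues hm c) := by
  set μ := hY.eigenvalues hm
  set v := hY.eigenvectorBasis hm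
  set g : Fin m → ℝ := fun i => if i ∈ Icc a c then μ i - μ c else 0
  have hg (i : Fin m) : 0 ≤ g i := by
    by_cases hi : i ∈ Icc a c
    · simp only [g, if_pos hi, sub_nonneg]
      exact hY.eigenvalues_antitone hm (mem_Icc.mp hi).2
    · simp only [g, if_neg hi, le_refl]
  have hPv :=
    (v.isSymmetric_diagonalMap g).re_inner_apply_self_eq_sum v (v.diagonalMap_apply_self g)
  refine ⟨v.diagonalMap g, v.isSymmetric_diagonalMap g, fun x => ?_, fun x hx => ?_, ?_⟩
  · rw [hPv]
    exact sum_nonneg fun i _ => mul_nonneg (hg i) (by positivity)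
  · rw [hPv, hY.re_inner_apply_self_eq_sum v (hY.apply_eigenvectorBasis hm),
      ← v.sum_sq_norm_inner_right, mul_sum, ← sum_add_distrib]
    refine sum_le_sum fun i _ => ?_
    by_cases hi : i ∈ (Ici a : Finset (Fin m))
    · by_cases hw : i ∈ Icc a c
      · simp only [g, if_pos hw]
        linarith
      · have : μ i ≤ μ c := by
          simp only [mem_Ici, mem_Icc, not_and, not_le] at hi hw
          exact hY.eigenvalues_antitone hm (hw hi).le
        simp only [g, if_neg hw, zero_mul, zero_add]
        exact mul_le_mul_of_nonneg_right this (by positivity)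
    · simp [v.inner_eq_zero_of_mem_span (s := (Ici a : Finset (Fin m))) hi hx]
  · rw [v.trace_diagonalMap, ← RCLike.ofReal_sum, RCLike.ofReal_re]
    simp only [g]
    rw [sum_ite_mem, univ_inter]

theorem sum_eigenvalues_add_sub_le (hX : X.IsSymmetric) (hY : Y.IsSymmetric) {ι : Type*}
    {K : Finset ι} {p q : ι → Fin m} (hp : Set.InjOn p K) {d : ℕ}
    (hpq : ∀ k ∈ K, p k + d ≤ q k) (hdK : d + #K ≤ m) :
    ∑ k ∈ K, ((hX.add hY).eigenvalues hm (q k) - hX.eigenvalues hm (p k)) ≤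
      ∑ j : Fin #K, hY.eigenvalues hm (Fin.castLE hdK (Fin.natAdd d j)) := by
  rcases K.eq_empty_or_nonempty with rfl | hK
  · simp only [sum_empty]
    exact (sum_eq_zero fun j _ => absurd j.isLt (by simp)).ge
  set r := #K
  have hr : 0 < r := hK.card_pos
  set μ := hY.eigenvalues hm
  set e : Fin r ↪ Fin m := (Fin.natAddEmb d).trans (Fin.castLEEmb hdK)
  set a : Fin m := ⟨d, by omega⟩
  set c : Fin m := e ⟨r - 1, by omega⟩
  have he (j : Fin r) : (e j : ℕ) = d + j := rfl
  have hwindow : univ.map e = Icc a c := by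
    ext i
    simp only [mem_map, mem_univ, true_and, mem_Icc, Fin.le_def, c, he, a]
    constructor
    · rintro ⟨j, rfl⟩
      rw [he]
      omega
    · exact fun ⟨h₁, h₂⟩ => ⟨⟨i - d, by omega⟩, Fin.ext (by rw [he, Fin.val_mk]; omega)⟩
  obtain ⟨P, hP, hP0, hYP, htrace⟩ := hY.exists_windowed_positive_part hm a c
  have hshift (k : ι) (hk : k ∈ K) :
      (hX.add hY).eigenvalues hm (q k) ≤ (hX.add hP).eigenvalues hm (p k) + μ c := by
    refine (hX.add hP).eigenvalues_le_eigenvalues_add_of_forall_le hm (hX.add hY) (j := d)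
      (Z := Submodule.span 𝕜 (hY.eigenvectorBasis hm '' (Ici a : Finset (Fin m))))
      (by rw [(hY.eigenvectorBasis hm).finrank_span_image, Fin.card_Ici, Fin.val_mk]; omega)
      (fun x hx => ?_) (hpq k hk)
    simp only [add_apply, inner_add_left, map_add]
    linarith [hYP x hx]
  calc ∑ k ∈ K, ((hX.add hY).eigenvalues hm (q k) - hX.eigenvalues hm (p k))
      ≤ ∑ k ∈ K, ((hX.add hP).eigenvalues hm (p k) - hX.eigenvalues hm (p k)) + r * μ c := by
        rw [← nsmul_eq_mul, ← sum_const, ← sum_add_distrib]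
        exact sum_le_sum fun k hk => by linarith [hshift k hk]
    _ ≤ RCLike.re (trace 𝕜 E P) + r * μ c := by
        gcongr
        exact sum_eigenvalues_add_sub_le_re_trace hm hX hP hP0 hp
    _ = ∑ j, μ (e j) := by
        rw [htrace, ← hwindow, sum_map, sum_sub_distrib, sum_const, card_univ, Fintype.card_fin,
          nsmul_eq_mul]
        ring

end LinearMap.IsSymmetric

namespace LinearMap

variable {F : Type*} [NormedAddCommGroup F] [InnerProductSpace 𝕜 F]
  [FiniteDimensional 𝕜 E] [FiniteDimensional 𝕜 F]

noncomputable def dilation (T : E →ₗ[𝕜] F) : WithLp 2 (E × F) →ₗ[𝕜] WithLp 2 (E × F) :=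
  (WithLp.linearEquiv 2 𝕜 (E × F)).symm.toLinearMap ∘ₗ
    ((adjoint T ∘ₗ WithLp.sndₗ 2 𝕜 E F).prod (T ∘ₗ WithLp.fstₗ 2 𝕜 E F))

variable (T : E →ₗ[𝕜] F)

theorem dilation_add (S : E →ₗ[𝕜] F) : (T + S).dilation = T.dilation + S.dilation := by
  refine LinearMap.ext fun z => WithLp.ofLp_injective 2 (Prod.ext ?_ rfl)
  show adjoint (T + S) z.snd = adjoint T z.snd + adjoint S z.snd
  rw [map_add, add_apply]

theorem isSymmetric_dilation : T.dilation.IsSymmetric := fun z w => by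
  show ⟪adjoint T z.snd, w.fst⟫_𝕜 + ⟪T z.fst, w.snd⟫_𝕜 =
    ⟪z.fst, adjoint T w.snd⟫_𝕜 + ⟪z.snd, T w.fst⟫_𝕜
  rw [adjoint_inner_left, adjoint_inner_right, add_comm]

theorem re_inner_dilation_apply_self (z : WithLp 2 (E × F)) :
    RCLike.re ⟪T.dilation z, z⟫_𝕜 = 2 * RCLike.re ⟪T z.fst, z.snd⟫_𝕜 := by
  show RCLike.re (⟪adjoint T z.snd, z.fst⟫_𝕜 + ⟪T z.fst, z.snd⟫_𝕜) = _
  rw [adjoint_inner_left, ← inner_conj_symm, map_add, RCLike.conj_re]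
  ring

theorem norm_apply_sq_eq_re_inner_adjoint_comp_self (x : E) :
    ‖T x‖ ^ 2 = RCLike.re ⟪(adjoint T ∘ₗ T) x, x⟫_𝕜 := by
  rw [comp_apply, adjoint_inner_left, inner_self_eq_norm_sq]

variable {N : ℕ} (hN : finrank 𝕜 (WithLp 2 (E × F)) = N)

theorem eigenvalues_dilation_rev (i : Fin N) :
    T.isSymmetric_dilation.eigenvalues hN i.rev = -T.isSymmetric_dilation.eigenvalues hN i := by
  refine T.isSymmetric_dilation.eigenvalues_rev_eq_neg_of_re_inner_map_self hN
    (LinearIsometryEquiv.withLpProdCongr 2 (LinearIsometryEquiv.refl 𝕜 E)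
      (LinearIsometryEquiv.neg 𝕜)) (fun z => ?_) i
  simp only [re_inner_dilation_apply_self]
  show 2 * RCLike.re ⟪T z.fst, -z.snd⟫_𝕜 = _
  rw [inner_neg_right, map_neg]
  ring

variable {n : ℕ}

theorem eigenvalues_dilation_le (hn : finrank 𝕜 E = n) (k : Fin N) (hk : (k : ℕ) < n) :
    T.isSymmetric_dilation.eigenvalues hN k ≤ T.singularValues k := by
  have hA := T.isSymmetric_adjoint_comp_self
  set σ := T.singularValues k
  set W := Submodule.span 𝕜 (hA.eigenvectorBasis hn '' (Ici ⟨k, hk⟩ : Finset (Fin n)))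
  refine T.isSymmetric_dilation.eigenvalues_le_of_forall_le hN
    (S := W.comap (WithLp.fstₗ 2 𝕜 E F)) ?_ fun z hz => ?_
  · have := Submodule.finrank_add_finrank_le_finrank_comap_add (WithLp.fstₗ 2 𝕜 E F) W
    rw [(hA.eigenvectorBasis hn).finrank_span_image, Fin.card_Ici, Fin.val_mk, hn, hN] at this
    omega
  have hTz : ‖T z.fst‖ ^ 2 ≤ (σ * ‖z.fst‖) ^ 2 := by
    rw [norm_apply_sq_eq_re_inner_adjoint_comp_self, mul_pow, T.sq_singularValues_of_lt hn hk]
    exact hA.re_inner_apply_self_le_of_mem_span hn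
      (fun j hj => hA.eigenvalues_antitone hn (mem_Ici.mp hj)) hz
  have hσ : 0 ≤ σ := T.singularValues_nonneg k
  have := (pow_le_pow_iff_left₀ (norm_nonneg _) (by positivity) two_ne_zero).mp hTz
  have := re_inner_le_norm (𝕜 := 𝕜) (T z.fst) z.snd
  rw [re_inner_dilation_apply_self, WithLp.prod_norm_sq_eq_of_L2]
  nlinarith [sq_nonneg (‖z.fst‖ - ‖z.snd‖), norm_nonneg z.snd]

theorem singularValues_le_eigenvalues_dilation (hn : finrank 𝕜 E = n) (k : Fin N)
    (hk : (k : ℕ) < n) :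
    T.singularValues k ≤ T.isSymmetric_dilation.eigenvalues hN k := by
  have hA := T.isSymmetric_adjoint_comp_self
  set σ := T.singularValues k
  set L : E →ₗ[𝕜] WithLp 2 (E × F) := (WithLp.linearEquiv 2 𝕜 (E × F)).symm.toLinearMap ∘ₗ
    (LinearMap.id.prod (((σ⁻¹ : ℝ) : 𝕜) • T))
  have hL : Function.Injective L := fun x y h => congrArg WithLp.fst h
  -- for `σ = 0` the junk value `σ⁻¹ = 0` makes this subspace `{(y, 0)}`, which still works
  refine T.isSymmetric_dilation.le_eigenvalues_of_forall_le hN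
    (S := (Submodule.span 𝕜 (hA.eigenvectorBasis hn '' (Iic ⟨k, hk⟩ : Finset (Fin n)))).map L)
    ?_ fun z hz => ?_
  · rw [← (Submodule.equivMapOfInjective L hL _).finrank_eq,
      (hA.eigenvectorBasis hn).finrank_span_image, Fin.card_Iic]
  obtain ⟨y, hy, rfl⟩ := Submodule.mem_map.mp hz
  have hTy : σ ^ 2 * ‖y‖ ^ 2 ≤ ‖T y‖ ^ 2 := by
    rw [norm_apply_sq_eq_re_inner_adjoint_comp_self, T.sq_singularValues_of_lt hn hk]
    exact hA.le_re_inner_apply_self_of_mem_span hn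
      (fun j hj => hA.eigenvalues_antitone hn (mem_Iic.mp hj)) hy
  have hσ : 0 ≤ σ := T.singularValues_nonneg k
  rw [re_inner_dilation_apply_self, WithLp.prod_norm_sq_eq_of_L2]
  show σ * (‖y‖ ^ 2 + ‖((σ⁻¹ : ℝ) : 𝕜) • T y‖ ^ 2) ≤
    2 * RCLike.re ⟪T y, ((σ⁻¹ : ℝ) : 𝕜) • T y⟫_𝕜
  rw [norm_smul, inner_smul_right, RCLike.re_ofReal_mul, inner_self_eq_norm_sq,
    RCLike.norm_ofReal, abs_of_nonneg (inv_nonneg.mpr hσ)]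
  rcases hσ.eq_or_lt with h0 | hpos
  · simp [← h0]
  · field_simp
    nlinarith

theorem eigenvalues_dilation (hn : finrank 𝕜 E = n) (k : Fin N) (hk : (k : ℕ) < n) :
    T.isSymmetric_dilation.eigenvalues hN k = T.singularValues k :=
  (T.eigenvalues_dilation_le hN hn k hk).antisymm
    (T.singularValues_le_eigenvalues_dilation hN hn k hk)

theorem sum_eigenvalues_dilation_castLE_natAdd (hn : finrank 𝕜 E = n) {b r : ℕ} (hbr : b + r ≤ n)
    (h : b + r ≤ N) :
    ∑ j : Fin r, T.isSymmetric_dilation.eigenvalues hN (Fin.castLE h (Fin.natAdd b j)) =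
      ∑ i ∈ Ico b (b + r), T.singularValues i := by
  rw [sum_Ico_eq_sum_range, add_tsub_cancel_left,
    ← Fin.sum_univ_eq_sum_range (fun j => T.singularValues (b + j))]
  exact sum_congr rfl fun j _ => T.eigenvalues_dilation hN hn _ (by simp; omega)

end LinearMap

theorem Finset.sum_coe_sort_union_ite {ι M : Type*} [DecidableEq ι] [AddCommMonoid M]
    {K₃ K₄ : Finset ι} (hK : Disjoint K₃ K₄) (f g : ι → M) :
    ∑ k : ↥(K₃ ∪ K₄), (if (k : ι) ∈ K₃ then f k else g k) = ∑ k ∈ K₃, f k + ∑ k ∈ K₄, g k := by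
  rw [sum_coe_sort (K₃ ∪ K₄) fun k => if k ∈ K₃ then f k else g k, sum_union hK]
  congr 1 <;> refine sum_congr rfl fun k hk => ?_
  · rw [if_pos hk]
  · rw [if_neg (disjoint_right.mp hK hk)]

namespace LinearMap

variable {F : Type*} [NormedAddCommGroup F] [InnerProductSpace 𝕜 F]
  [FiniteDimensional 𝕜 E] [FiniteDimensional 𝕜 F]

theorem sum_singularValues_add_sub_le (T S : E →ₗ[𝕜] F) {n : ℕ} (hE : n ≤ finrank 𝕜 E)
    (hF : n ≤ finrank 𝕜 F) {ι : Type*} [DecidableEq ι] {K₃ K₄ : Finset ι}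
    (hK : Disjoint K₃ K₄) {t s : ι → ℕ} {b : ℕ} (hts : ∀ k ∈ K₃ ∪ K₄, t k + b ≤ s k ∧ s k < n)
    (htinj : Set.InjOn t K₃) (hsinj : Set.InjOn s K₄) (hr : b + (#K₃ + #K₄) ≤ n) :
    ∑ k ∈ K₃, (T + S).singularValues (s k) - ∑ k ∈ K₄, (T + S).singularValues (t k) ≤
      ∑ k ∈ K₃, T.singularValues (t k) - ∑ k ∈ K₄, T.singularValues (s k) +
        ∑ i ∈ Ico b (b + (#K₃ + #K₄)), S.singularValues i := by
  set N := finrank 𝕜 (WithLp 2 (E × F))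
  have hN : N = finrank 𝕜 E + finrank 𝕜 F := WithLp.finrank_prod 2
  set K := K₃ ∪ K₄
  have hKc : #(univ : Finset K) = #K₃ + #K₄ := by
    rw [card_univ, Fintype.card_coe, card_union_of_disjoint hK]
  have ht (k : K) : t k < n := by have := hts k k.2; omega
  have hs (k : K) : s k < n := (hts k k.2).2
  -- `σᵢ` is eigenvalue `i` of the dilation and `-σᵢ` is eigenvalue `i.rev`, so the positions
  -- used for `K₄` (bottom half) never collide with those used for `K₃` (top half).
  let pos (i : ℕ) (hi : i < n) : Fin N := ⟨i, by omega⟩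
  let p : K → Fin N := fun k => if k.1 ∈ K₃ then pos (t k) (ht k) else (pos (s k) (hs k)).rev
  let q : K → Fin N := fun k => if k.1 ∈ K₃ then pos (s k) (hs k) else (pos (t k) (ht k)).rev
  have hp : Set.InjOn p (univ : Finset K) := by
    intro k _ l _ h
    have h' := congrArg Fin.val h
    by_cases hk : k.1 ∈ K₃ <;> by_cases hl : l.1 ∈ K₃ <;>
      simp only [p, pos, hk, hl, if_true, if_false, Fin.val_rev] at h'
    · exact Subtype.ext (htinj hk hl h')
    · have := hs l; have := ht k; omega
    · have := hs k; have := ht l; omega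
    · have hk₄ := (mem_union.mp k.2).resolve_left hk
      have hl₄ := (mem_union.mp l.2).resolve_left hl
      exact Subtype.ext (hsinj hk₄ hl₄ (by have := hs k; have := hs l; omega))
  have hpq : ∀ k ∈ (univ : Finset K), p k + b ≤ q k := by
    intro k _
    have := hts k k.2
    by_cases hk : k.1 ∈ K₃ <;> simp only [p, q, pos, hk, if_true, if_false, Fin.val_rev] <;> omega
  have key := T.isSymmetric_dilation.sum_eigenvalues_add_sub_le rfl S.isSymmetric_dilation hp hpq
    (by rw [hKc]; omega)
  have hTS : (T.isSymmetric_dilation.add S.isSymmetric_dilation).eigenvalues rfl =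
      (T + S).isSymmetric_dilation.eigenvalues rfl := by
    congr 1
    exact (dilation_add T S).symm
  have eig (R : E →ₗ[𝕜] F) (i : ℕ) (hi : i < n) :
      R.isSymmetric_dilation.eigenvalues rfl (pos i hi) = R.singularValues i :=
    R.eigenvalues_dilation rfl rfl _ (hi.trans_le hE)
  have eig_rev (R : E →ₗ[𝕜] F) (i : ℕ) (hi : i < n) :
      R.isSymmetric_dilation.eigenvalues rfl (pos i hi).rev = -R.singularValues i := by
    rw [eigenvalues_dilation_rev, eig R i hi]
  have hterm (k : K) : (T + S).isSymmetric_dilation.eigenvalues rfl (q k) -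
      T.isSymmetric_dilation.eigenvalues rfl (p k) =
      if k.1 ∈ K₃ then (T + S).singularValues (s k) - T.singularValues (t k)
      else T.singularValues (s k) - (T + S).singularValues (t k) := by
    by_cases hk : k.1 ∈ K₃
    · simp only [p, q, hk, if_true, eig]
    · simp only [p, q, hk, if_false, eig_rev]
      ring
  rw [hTS, sum_congr rfl fun k _ => hterm k, sum_coe_sort_union_ite hK
      (fun k => (T + S).singularValues (s k) - T.singularValues (t k))
      (fun k => T.singularValues (s k) - (T + S).singularValues (t k)),
    S.sum_eigenvalues_dilation_castLE_natAdd rfl rfl (by rw [hKc]; omega), hKc,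
    sum_sub_distrib, sum_sub_distrib] at key
  linarith

end LinearMap

theorem Tuple.apply_sort_rev_of_antitone {n : ℕ} {α : Type*} [LinearOrder α] {f g : Fin n → α}
    (σ : Equiv.Perm (Fin n)) (hfg : f = g ∘ σ) (hg : Antitone g) (j : Fin n) :
    f (Tuple.sort f j.rev) = g j := by
  have hsort : f ∘ Tuple.sort f = g ∘ Fin.revPerm := by
    rw [hfg, Tuple.comp_perm_comp_sort_eq_comp_sort]
    exact (Tuple.comp_sort_eq_comp_iff_monotone.mpr fun a b hab => hg (Fin.rev_anti hab)).symm
  simpa using congrFun hsort j.rev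

theorem svals_eq_singularValues {n : ℕ} (M : Matrix (Fin n) (Fin n) ℂ) (k : ℕ) :
    svals M k = (Matrix.toEuclideanLin M).singularValues (k - 1) := by
  set L := Matrix.toEuclideanLin M
  have hn : finrank ℂ (EuclideanSpace ℂ (Fin n)) = n := finrank_euclideanSpace_fin
  have hL : Matrix.toEuclideanLin (M.conjTranspose * M) = LinearMap.adjoint L ∘ₗ L := by
    rw [Matrix.toLpLin_mul 2 2 2, Matrix.toEuclideanLin_conjTranspose_eq_adjoint]
  have hLL := L.isSymmetric_adjoint_comp_self
  unfold svals
  split_ifs with h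
  · rw [L.singularValues_of_lt hn h]
    refine Tuple.apply_sort_rev_of_antitone
      (f := fun i => √((Matrix.isHermitian_conjTranspose_mul_self M).eigenvalues i))
      (g := fun i => √(hLL.eigenvalues hn i))
      ((Fintype.equivOfCardEq (Fintype.card_fin _)).symm.trans (finCongr (Fintype.card_fin n)))
      (funext fun i => congrArg Real.sqrt (LinearMap.IsSymmetric.eigenvalues_congr _ _ hL _ _ _))
      (fun a b hab => Real.sqrt_le_sqrt (hLL.eigenvalues_antitone hn hab)) _
  · rw [L.singularValues_of_finrank_le (by rw [hn]; omega)]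

theorem Finset.sum_Icc_sub_one_eq_sum_Ico {M : Type*} [AddCommMonoid M] (f : ℕ → M) {b : ℕ}
    (hb : 1 ≤ b) (r : ℕ) :
    ∑ k ∈ Icc b (b + r - 1), f (k - 1) = ∑ i ∈ Ico (b - 1) (b - 1 + r), f i := by
  refine sum_nbij' (· - 1) (· + 1) ?_ ?_ ?_ ?_ fun i _ => rfl <;> intro i hi <;>
    simp only [mem_Icc, mem_Ico] at hi ⊢ <;> omega

theorem stmt11_general {n : ℕ} (A B : Matrix (Fin n) (Fin n) ℂ)
    (b : ℕ) (hb : 1 ≤ b)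
    (K₃ K₄ : Finset ℕ) (hK : Disjoint K₃ K₄)
    (t s : ℕ → ℕ)
    (hts : ∀ k ∈ K₃ ∪ K₄, 1 ≤ t k ∧ t k ≤ s k ∧ s k ≤ n ∧ b - 1 ≤ s k - t k)
    (htinj : Set.InjOn t K₃) (hsinj : Set.InjOn s K₄)
    (hr : b + (K₃.card + K₄.card) - 1 ≤ n) :
    ∑ k ∈ K₃, svals (A + B) (s k) - ∑ k ∈ K₄, svals (A + B) (t k) ≤
      ∑ k ∈ K₃, svals A (t k) - ∑ k ∈ K₄, svals A (s k) +
        ∑ k ∈ Finset.Icc b (b + (K₃.card + K₄.card) - 1), svals B k := by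
  have hn : finrank ℂ (EuclideanSpace ℂ (Fin n)) = n := finrank_euclideanSpace_fin
  have hts' (k : ℕ) (hk : k ∈ K₃ ∪ K₄) : t k - 1 + (b - 1) ≤ s k - 1 ∧ s k - 1 < n := by
    have := hts k hk
    omega
  have hpred {K : Finset ℕ} {u : ℕ → ℕ} (hK : ∀ k ∈ K, 1 ≤ u k) (hu : Set.InjOn u K) :
      Set.InjOn (fun k => u k - 1) K := fun k hk l hl h => by
    have := hK k hk
    have := hK l hl
    exact hu hk hl (by simp only at h; omega)
  simp only [svals_eq_singularValues, map_add]
  rw [sum_Icc_sub_one_eq_sum_Ico _ hb]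
  exact (Matrix.toEuclideanLin A).sum_singularValues_add_sub_le (Matrix.toEuclideanLin B)
    hn.ge hn.ge hK hts'
    (hpred (fun k hk => (hts k (mem_union_left _ hk)).1) htinj)
    (hpred (fun k hk => by have := hts k (mem_union_right _ hk); omega) hsinj) (by omega)

theorem stmt11 {n : ℕ} (A B : Matrix (Fin n) (Fin n) ℂ)
    (b : ℕ) (hb : 1 ≤ b)
    (K₃ K₄ : Finset ℕ) (hK : Disjoint K₃ K₄)
    (t s : ℕ → ℕ)
    (hts : ∀ k ∈ K₃ ∪ K₄, 1 ≤ t k ∧ t k ≤ s k ∧ s k ≤ n ∧ b - 1 ≤ s k - t k)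
    (htinj : Set.InjOn t K₃) (hsinj : Set.InjOn s K₄)
    (himg : ∀ k ∈ K₃, ∀ l ∈ K₄, t k ≠ s l)
    (hr : b + (K₃.card + K₄.card) - 1 ≤ n) :
    ∑ k ∈ K₃, svals (A + B) (s k) - ∑ k ∈ K₄, svals (A + B) (t k) ≤
      ∑ k ∈ K₃, svals A (t k) - ∑ k ∈ K₄, svals A (s k) +
        ∑ k ∈ Finset.Icc b (b + (K₃.card + K₄.card) - 1), svals B k :=
  stmt11_general A B b hb K₃ K₄ hK t s hts htinj hsinj hr
end
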